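/- If a_{k,i} denotes the number of atomic set partitions of size k with i parts, then as formal power series in t and q: 1/(1 - \sum_{k\ge 1} \sum_{i=1}^{k} a_{k,i} t^i q^k) = \sum_{n\ge 0} \sum_{r\ge 0} S_{n,r} t^r q^n, where S_{n,r} is the number of set partitions of [n] into r parts. -/

import Mathlib

open scoped Classical
noncomputable section

/-- The ground set `[n] = {1, …, n}`. -/
def ground (n : ℕ) : Finset ℕ := Finset.Icc 1 n

/-- `A` is a set partition of `[n]`. -/
def IsSetPartition (n : ℕ) (A : Finset (Finset ℕ)) : Prop :=
  (∀ B ∈ A, B.Nonempty) ∧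
  (∀ B ∈ A, ∀ C ∈ A, B ≠ C → Disjoint B C) ∧
  A.sup id = ground n

/-- Shift every entry of every part by `n`. -/
def shiftP (n : ℕ) (A : Finset (Finset ℕ)) : Finset (Finset ℕ) :=
  A.image (fun B => B.image (· + n))

/-- Shifted concatenation `A|B` of a set partition `A ⊢ [n]` with `B`. -/
def concatP (n : ℕ) (A B : Finset (Finset ℕ)) : Finset (Finset ℕ) :=
  A ∪ shiftP n B

/-- `A` is an atomic set partition of `[n]`: nonempty and not a nontrivial
shifted concatenation. -/
def AtomicP (n : ℕ) (A : Finset (Finset ℕ)) : Prop :=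
  IsSetPartition n A ∧ 0 < n ∧
  ¬ ∃ k B C, 0 < k ∧ k < n ∧ IsSetPartition k B ∧ IsSetPartition (n - k) C ∧
      A = concatP k B C

/-- Shifted concatenation of a list of (size, set partition) pairs. -/
def concatListP : List (ℕ × Finset (Finset ℕ)) → ℕ × Finset (Finset ℕ)
  | [] => (0, ∅)
  | p :: L => ((concatListP L).1 + p.1, concatP p.1 p.2 (concatListP L).2)

/-- `L` is the atomic factorization `A^!` of the set partition `A ⊢ [n]`. -/
def AtomicFactorization (n : ℕ) (A : Finset (Finset ℕ))
    (L : List (ℕ × Finset (Finset ℕ))) : Prop :=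
  (∀ p ∈ L, AtomicP p.1 p.2) ∧ concatListP L = (n, A)

/-- The Bell number: the number of set partitions of `[n]`. -/
def bell (n : ℕ) : ℕ := Nat.card {A : Finset (Finset ℕ) // IsSetPartition n A}

/-- Stirling numbers of the second kind: set partitions of `[n]` into `k` parts. -/
def stirling2 (n k : ℕ) : ℕ :=
  Nat.card {A : Finset (Finset ℕ) // IsSetPartition n A ∧ A.card = k}

/-- The number of atomic set partitions of `[n]` into `k` parts. -/
def atomCount (n k : ℕ) : ℕ :=
  Nat.card {A : Finset (Finset ℕ) // AtomicP n A ∧ A.card = k}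

/-- The number of atomic set partitions of `[n]`. -/
def atomCount' (n : ℕ) : ℕ := Nat.card {A : Finset (Finset ℕ) // AtomicP n A}

/-- Refinement order: `A ≤ B` iff every part of `A` is contained in a part of `B`. -/
def refines (A B : Finset (Finset ℕ)) : Prop := ∀ a ∈ A, ∃ b ∈ B, a ⊆ b

/-- The meet `A ∧ B` of two set partitions. -/
def meetP (A B : Finset (Finset ℕ)) : Finset (Finset ℕ) :=
  ((A ×ˢ B).image fun p => p.1 ∩ p.2).filter (·.Nonempty)

/-- The set partition `{[n]}` with a single part (empty if `n = 0`). -/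
def onePartP (n : ℕ) : Finset (Finset ℕ) := if n = 0 then ∅ else {ground n}

/-- The finite set of set partitions of `[n]` satisfying a predicate `P`. -/
def SPs (n : ℕ) (P : Finset (Finset ℕ) → Prop) : Finset (Finset (Finset ℕ)) :=
  (ground n).powerset.powerset.filter fun A => IsSetPartition n A ∧ P A

/-- Covering relation for `≤_*`: `B` covers `A` if `B` is obtained from `A` by merging two
parts `a, a'` with every element of `a` smaller than every element of `a'`. -/
def coverStar (A B : Finset (Finset ℕ)) : Prop :=
  ∃ a ∈ A, ∃ a' ∈ A, a ≠ a' ∧ (∀ x ∈ a, ∀ y ∈ a', x < y) ∧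
    B = insert (a ∪ a') ((A.erase a).erase a')

/-- The order `≤_*` on set partitions. -/
def leStar : Finset (Finset ℕ) → Finset (Finset ℕ) → Prop :=
  Relation.ReflTransGen coverStar

/-- Restriction `A↓_S` of a set partition to the entries in `S`. -/
def restrictP (A : Finset (Finset ℕ)) (S : Finset ℕ) : Finset (Finset ℕ) :=
  (A.image (· ∩ S)).filter (·.Nonempty)

/-- The standardization map of a finite set `S`: sends the `i`-th smallest element of `S`
to `i` (1-indexed). -/
def stMap (S : Finset ℕ) (x : ℕ) : ℕ := (S.filter (· ≤ x)).card

/-- Standardization of a set partition: relabel its entries to `{1,…,m}` preserving order. -/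
def stdP (A : Finset (Finset ℕ)) : Finset (Finset ℕ) :=
  A.image fun b => b.image (stMap (A.sup id))

/-- The map raising `{1,…,|S|}` order-preservingly onto `S`. -/
def raiseMap (S : Finset ℕ) (x : ℕ) : ℕ := (S.sort (· ≤ ·)).getD (x - 1) 0

/-- `A↑_S`: raise the entries of `A` order-preservingly so the ground set becomes `S`. -/
def raiseP (S : Finset ℕ) (A : Finset (Finset ℕ)) : Finset (Finset ℕ) :=
  A.image fun b => b.image (raiseMap S)

/-- `IsShuffle l₁ l₂ l`: `l` is a shuffle (interleaving) of `l₁` and `l₂`. -/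
inductive IsShuffle {α : Type*} : List α → List α → List α → Prop
  | nil : IsShuffle [] [] []
  | left {a : α} {l₁ l₂ l : List α} : IsShuffle l₁ l₂ l → IsShuffle (a :: l₁) l₂ (a :: l)
  | right {a : α} {l₁ l₂ l : List α} : IsShuffle l₁ l₂ l → IsShuffle l₁ (a :: l₂) (a :: l)

/-- A word is Lyndon if it is nonempty and lexicographically strictly smaller than all of
its proper cyclic rotations. -/
def LyndonWord {α : Type*} (lt : α → α → Prop) (w : List α) : Prop :=
  w ≠ [] ∧ ∀ i, 0 < i → i < w.length → List.Lex lt w (w.rotate i)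

/-- A set partition is Lyndon (with respect to a total order `lt` on atomic set partitions)
if its atomic factorization is a Lyndon word. -/
def LyndonPartition (lt : ℕ × Finset (Finset ℕ) → ℕ × Finset (Finset ℕ) → Prop)
    (n : ℕ) (A : Finset (Finset ℕ)) : Prop :=
  ∃ L, AtomicFactorization n A L ∧ LyndonWord lt L

/-! ### Set compositions -/

/-- `Φ` is a set composition of `[n]`: an ordered sequence of nonempty pairwise disjoint
sets whose union is `[n]`. -/
def IsSetComposition (n : ℕ) (Φ : List (Finset ℕ)) : Prop :=
  (∀ B ∈ Φ, B.Nonempty) ∧ Φ.Pairwise Disjoint ∧ Φ.foldr (· ∪ ·) ∅ = ground n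

/-- Shift every entry of every part of a set composition by `n`. -/
def shiftC (n : ℕ) (Φ : List (Finset ℕ)) : List (Finset ℕ) :=
  Φ.map (·.image (· + n))

/-- Shifted concatenation `Φ|Ψ` of set compositions, `Φ ⊨ [n]`. -/
def concatC (n : ℕ) (Φ Ψ : List (Finset ℕ)) : List (Finset ℕ) := Φ ++ shiftC n Ψ

/-- An atomic set composition: nonempty and not a nontrivial shifted concatenation. -/
def AtomicC (n : ℕ) (Φ : List (Finset ℕ)) : Prop :=
  IsSetComposition n Φ ∧ 0 < n ∧
  ¬ ∃ k Ψ Γ, 0 < k ∧ k < n ∧ IsSetComposition k Ψ ∧ IsSetComposition (n - k) Γ ∧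
      Φ = concatC k Ψ Γ

/-- Shifted concatenation of a list of (size, set composition) pairs. -/
def concatListC : List (ℕ × List (Finset ℕ)) → ℕ × List (Finset ℕ)
  | [] => (0, [])
  | p :: L => ((concatListC L).1 + p.1, concatC p.1 p.2 (concatListC L).2)

/-- `L` is the atomic factorization `Φ^!` of the set composition `Φ ⊨ [n]`. -/
def AtomicFactorizationC (n : ℕ) (Φ : List (Finset ℕ))
    (L : List (ℕ × List (Finset ℕ))) : Prop :=
  (∀ p ∈ L, AtomicC p.1 p.2) ∧ concatListC L = (n, Φ)

/-- Covering relation for `≤_*` on set compositions: merge two adjacent parts `a, b` with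
every element of `a` smaller than every element of `b`. -/
def coverStarC (Φ Ψ : List (Finset ℕ)) : Prop :=
  ∃ L₁ a b L₂, Φ = L₁ ++ a :: b :: L₂ ∧ (∀ x ∈ a, ∀ y ∈ b, x < y) ∧
    Ψ = L₁ ++ (a ∪ b) :: L₂

/-- The order `≤_*` on set compositions. -/
def leStarC : List (Finset ℕ) → List (Finset ℕ) → Prop :=
  Relation.ReflTransGen coverStarC

/-- The meet operation `Φ ∧ Ψ` on set compositions: the nonempty intersections
`Φ_i ∩ Ψ_j` in lexicographic order of `(i, j)`. -/
def meetC (Φ Ψ : List (Finset ℕ)) : List (Finset ℕ) :=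
  (Φ.flatMap fun a => Ψ.map fun b => a ∩ b).filter (·.Nonempty)

/-- The one-part set composition `([n])` (empty if `n = 0`). -/
def onePartC (n : ℕ) : List (Finset ℕ) := if n = 0 then [] else [ground n]

/-- Lists of length `k` with all entries in `s`. -/
def listsOfLen (s : Finset (Finset ℕ)) : ℕ → Finset (List (Finset ℕ))
  | 0 => {[]}
  | k + 1 => (s ×ˢ listsOfLen s k).image fun p => p.1 :: p.2

/-- The finite set of set compositions of `[n]` satisfying a predicate `P`. -/
def SCs (n : ℕ) (P : List (Finset ℕ) → Prop) : Finset (List (Finset ℕ)) :=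
  ((Finset.range (n + 1)).biUnion fun k => listsOfLen (ground n).powerset k).filter
    fun Φ => IsSetComposition n Φ ∧ P Φ

/-- `Φ↑_S`: raise the entries of a set composition order-preservingly into `S`. -/
def raiseC (S : Finset ℕ) (Φ : List (Finset ℕ)) : List (Finset ℕ) :=
  Φ.map (·.image (raiseMap S))

/-- Standardization of a set composition. -/
def stdC (Φ : List (Finset ℕ)) : List (Finset ℕ) :=
  Φ.map (·.image (stMap (Φ.foldr (· ∪ ·) ∅)))

/-- `α(Φ)`: the composition of part sizes of `Φ`. -/
def alphaC (Φ : List (Finset ℕ)) : List ℕ := Φ.map Finset.card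

/-- The order `≤_#` on set compositions: `Φ ≤_# Ψ` iff `α(Φ) = α(Ψ)` and each atomic factor
of `Φ` is the standardization of the corresponding consecutive block of parts of `Ψ`. -/
def leSharp (Φ Ψ : List (Finset ℕ)) : Prop :=
  alphaC Φ = alphaC Ψ ∧
  ∃ (L : List (ℕ × List (Finset ℕ))) (Bs : List (List (Finset ℕ))),
    (∀ p ∈ L, AtomicC p.1 p.2) ∧ (concatListC L).2 = Φ ∧
    Ψ = Bs.flatten ∧ List.Forall₂ (fun b (l : ℕ × List (Finset ℕ)) => stdC b = l.2) Bs L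

/-! ### Index types -/

/-- Set partitions with their sizes. -/
abbrev SPIdx := {x : ℕ × Finset (Finset ℕ) // IsSetPartition x.1 x.2}

/-- Atomic set partitions with their sizes. -/
abbrev AtomIdx := {x : ℕ × Finset (Finset ℕ) // AtomicP x.1 x.2}

/-- Set compositions with their sizes. -/
abbrev SCIdx := {x : ℕ × List (Finset ℕ) // IsSetComposition x.1 x.2}

/-- Atomic set compositions with their sizes. -/
abbrev AtomCIdx := {x : ℕ × List (Finset ℕ) // AtomicC x.1 x.2}


/-! A nonempty set partition `A` of `[n]` has a least positive *break* `k`: no part of `A` meets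
both `[k]` and its complement. Cutting there writes `A = B | C` with `B` atomic, and this first
factor is unique, since a smaller break of `A` would be a break of `B`. Recording the size and the
number of parts of `B` gives `S_{n,r} = [n = r = 0] + ∑ a_{k,i} S_{n-k,r-i}`, which is the
coefficient form of `S = 1 + F S`, i.e. `(1 - F) S = 1`. -/

section PartitionOf

open Finset

variable {α β : Type*} [DecidableEq α] [DecidableEq β]

/-- `IsSetPartition n A` is `IsPartitionOf (ground n) A` by definition. -/
def IsPartitionOf (S : Finset α) (A : Finset (Finset α)) : Prop :=
  (∀ B ∈ A, B.Nonempty) ∧ (∀ B ∈ A, ∀ C ∈ A, B ≠ C → Disjoint B C) ∧ A.sup id = S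

namespace IsPartitionOf

variable {S T : Finset α} {A A' : Finset (Finset α)}

lemma subset_of_mem (hA : IsPartitionOf S A) {B : Finset α} (hB : B ∈ A) : B ⊆ S :=
  hA.2.2 ▸ le_sup (f := id) hB

lemma exists_mem_of_mem (hA : IsPartitionOf S A) {x : α} (hx : x ∈ S) : ∃ B ∈ A, x ∈ B := by
  rw [← hA.2.2] at hx
  simpa using mem_sup.mp hx

lemma union (hA : IsPartitionOf S A) (hA' : IsPartitionOf T A') (hST : Disjoint S T) :
    IsPartitionOf (S ∪ T) (A ∪ A') := by
  refine ⟨?_, ?_, by rw [sup_union, hA.2.2, hA'.2.2]; rfl⟩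
  · simp only [mem_union]
    rintro B (hB | hB)
    exacts [hA.1 B hB, hA'.1 B hB]
  · simp only [mem_union]
    rintro B (hB | hB) C (hC | hC) hBC
    · exact hA.2.1 B hB C hC hBC
    · exact hST.mono (hA.subset_of_mem hB) (hA'.subset_of_mem hC)
    · exact hST.symm.mono (hA'.subset_of_mem hB) (hA.subset_of_mem hC)
    · exact hA'.2.1 B hB C hC hBC

lemma disjoint (hA : IsPartitionOf S A) (hA' : IsPartitionOf T A') (hST : Disjoint S T) :
    Disjoint A A' :=
  disjoint_left.2 fun B hB hB' => (hA.1 B hB).ne_empty <|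
    (disjoint_self_iff_empty B).1 (hST.mono (hA.subset_of_mem hB) (hA'.subset_of_mem hB'))

lemma image (hA : IsPartitionOf S A) {f : α → β} (hf : Set.InjOn f S) :
    IsPartitionOf (S.image f) (A.image (·.image f)) := by
  refine ⟨?_, ?_, ?_⟩
  · simp only [mem_image]
    rintro _ ⟨B, hB, rfl⟩
    exact (hA.1 B hB).image f
  · simp only [mem_image]
    rintro _ ⟨B, hB, rfl⟩ _ ⟨C, hC, rfl⟩ hBC
    have hBC' := hA.2.1 B hB C hC (fun h => hBC (h ▸ rfl))
    refine disjoint_left.2 ?_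
    simp only [mem_image]
    rintro _ ⟨b, hb, rfl⟩ ⟨c, hc, hcb⟩
    rw [hf (hA.subset_of_mem hC hc) (hA.subset_of_mem hB hb) hcb] at hc
    exact disjoint_left.1 hBC' hb hc
  · rw [← hA.2.2]
    ext y
    simp only [sup_image, mem_sup, mem_image, Function.comp_apply, id]
    aesop

lemma card_image (hA : IsPartitionOf S A) {f : α → β} (hf : Set.InjOn f S) :
    (A.image (·.image f)).card = A.card :=
  card_image_of_injOn fun _ hB _ hC =>
    image_injOn_powerset_of_injOn hf (by simpa using hA.subset_of_mem hB)
      (by simpa using hA.subset_of_mem hC)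

lemma filter_subset (hA : IsPartitionOf S A) (hT : ∀ B ∈ A, B ⊆ T ∨ Disjoint B T) :
    IsPartitionOf (S ∩ T) (A.filter (· ⊆ T)) := by
  refine ⟨fun B hB => hA.1 B (mem_filter.1 hB).1,
    fun B hB C hC => hA.2.1 B (mem_filter.1 hB).1 C (mem_filter.1 hC).1, ?_⟩
  ext x
  simp only [mem_sup, mem_filter, id, mem_inter]
  constructor
  · rintro ⟨B, ⟨hB, hBT⟩, hx⟩
    exact ⟨hA.subset_of_mem hB hx, hBT hx⟩
  · rintro ⟨hxS, hxT⟩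
    obtain ⟨B, hB, hx⟩ := hA.exists_mem_of_mem hxS
    refine ⟨B, ⟨hB, (hT B hB).resolve_right fun h => disjoint_left.1 h hx hxT⟩, hx⟩

lemma filter_not_subset (hA : IsPartitionOf S A) (hT : ∀ B ∈ A, B ⊆ T ∨ Disjoint B T) :
    IsPartitionOf (S \ T) (A.filter (¬ · ⊆ T)) := by
  refine ⟨fun B hB => hA.1 B (mem_filter.1 hB).1,
    fun B hB C hC => hA.2.1 B (mem_filter.1 hB).1 C (mem_filter.1 hC).1, ?_⟩
  ext x
  simp only [mem_sup, mem_filter, id, mem_sdiff]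
  constructor
  · rintro ⟨B, ⟨hB, hBT⟩, hx⟩
    exact ⟨hA.subset_of_mem hB hx, disjoint_left.1 ((hT B hB).resolve_left hBT) hx⟩
  · rintro ⟨hxS, hxT⟩
    obtain ⟨B, hB, hx⟩ := hA.exists_mem_of_mem hxS
    exact ⟨B, ⟨hB, fun h => hxT (h hx)⟩, hx⟩

end IsPartitionOf

end PartitionOf

section Concatenation

open Finset

variable {n k m : ℕ} {A B C : Finset (Finset ℕ)} {D : Finset ℕ}

lemma ground_add (k m : ℕ) : ground (k + m) = ground k ∪ (ground m).image (· + k) := by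
  ext x
  simp only [ground, image_add_right_Icc, mem_union, mem_Icc]
  omega

lemma disjoint_ground_image_add (k m : ℕ) : Disjoint (ground k) ((ground m).image (· + k)) := by
  simp only [ground, image_add_right_Icc, disjoint_left, mem_Icc]
  omega

lemma ground_inter_of_le (h : k ≤ n) : ground n ∩ ground k = ground k :=
  inter_eq_right.2 (Icc_subset_Icc_right h)

lemma image_sub_ground_sdiff (h : k ≤ n) :
    (ground n \ ground k).image (· - k) = ground (n - k) := by
  ext x
  simp only [ground, mem_image, mem_sdiff, mem_Icc]
  constructor
  · rintro ⟨y, hy, rfl⟩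
    omega
  · intro hx
    exact ⟨x + k, by omega, by omega⟩

lemma IsSetPartition.isPartitionOf_shiftP (hC : IsSetPartition m C) :
    IsPartitionOf ((ground m).image (· + k)) (shiftP k C) :=
  IsPartitionOf.image hC (add_left_injective k).injOn

lemma IsSetPartition.concatP (hB : IsSetPartition k B) (hC : IsSetPartition m C) :
    IsSetPartition (k + m) (concatP k B C) := by
  show IsPartitionOf _ _
  rw [ground_add]
  exact IsPartitionOf.union hB hC.isPartitionOf_shiftP (disjoint_ground_image_add k m)

lemma card_concatP (hB : IsSetPartition k B) (hC : IsSetPartition m C) :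
    (concatP k B C).card = B.card + C.card := by
  rw [concatP, card_union_of_disjoint
    (IsPartitionOf.disjoint hB hC.isPartitionOf_shiftP (disjoint_ground_image_add k m)),
    shiftP, IsPartitionOf.card_image hC (add_left_injective k).injOn]

lemma not_subset_ground_of_mem_shiftP (hC : IsSetPartition m C) (hD : D ∈ shiftP k C) :
    ¬ D ⊆ ground k := fun hDk => by
  obtain ⟨x, hx⟩ := hC.isPartitionOf_shiftP.1 D hD
  exact disjoint_left.1 (disjoint_ground_image_add k m) (hDk hx)
    (hC.isPartitionOf_shiftP.subset_of_mem hD hx)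

end Concatenation

section Breaks

open Finset

variable {n k m j : ℕ} {A B C : Finset (Finset ℕ)}

def IsBreak (k : ℕ) (A : Finset (Finset ℕ)) : Prop :=
  ∀ B ∈ A, B ⊆ ground k ∨ Disjoint B (ground k)

def lowPart (k : ℕ) (A : Finset (Finset ℕ)) : Finset (Finset ℕ) :=
  A.filter (· ⊆ ground k)

def highPart (k : ℕ) (A : Finset (Finset ℕ)) : Finset (Finset ℕ) :=
  (A.filter (¬ · ⊆ ground k)).image (·.image (· - k))

lemma IsBreak.subset (h : IsBreak k A) (hBA : B ⊆ A) : IsBreak k B :=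
  fun D hD => h D (hBA hD)

lemma IsBreak.of_lowPart (hk : IsBreak k A) (hjk : j ≤ k) (hj : IsBreak j (lowPart k A)) :
    IsBreak j A := by
  intro D hD
  rcases hk D hD with hDk | hDk
  · exact hj D (mem_filter.2 ⟨hD, hDk⟩)
  · exact Or.inr (hDk.mono_right (Icc_subset_Icc_right hjk))

lemma IsSetPartition.isBreak (hA : IsSetPartition n A) : IsBreak n A :=
  fun _ hD => Or.inl (IsPartitionOf.subset_of_mem hA hD)

lemma isBreak_concatP (hB : IsSetPartition k B) (hC : IsSetPartition m C) :
    IsBreak k (concatP k B C) := by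
  intro D hD
  rcases mem_union.1 hD with hD | hD
  · exact Or.inl (IsPartitionOf.subset_of_mem hB hD)
  · exact Or.inr ((disjoint_ground_image_add k m).symm.mono_left
      (hC.isPartitionOf_shiftP.subset_of_mem hD))

lemma IsSetPartition.lowPart (hA : IsSetPartition n A) (hkn : k ≤ n) (hk : IsBreak k A) :
    IsSetPartition k (lowPart k A) := by
  have := IsPartitionOf.filter_subset hA hk
  rwa [ground_inter_of_le hkn] at this

lemma lt_of_mem_of_not_subset_ground (hA : IsSetPartition n A) (hk : IsBreak k A) {D : Finset ℕ}
    (hD : D ∈ A) (hDk : ¬ D ⊆ ground k) {x : ℕ} (hx : x ∈ D) : k < x := by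
  have hxn := IsPartitionOf.subset_of_mem hA hD hx
  have hxk := disjoint_left.1 ((hk D hD).resolve_left hDk) hx
  simp only [ground, mem_Icc] at hxn hxk
  omega

lemma IsSetPartition.highPart (hA : IsSetPartition n A) (hkn : k ≤ n) (hk : IsBreak k A) :
    IsSetPartition (n - k) (highPart k A) := by
  have hinj : Set.InjOn (· - k) ↑(ground n \ ground k) := by
    intro x hx y hy hxy
    simp only [coe_sdiff, Set.mem_sdiff, mem_coe, ground, mem_Icc] at hx hy
    simp only at hxy
    omega
  have := (IsPartitionOf.filter_not_subset hA hk).image hinj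
  rwa [image_sub_ground_sdiff hkn] at this

lemma concatP_lowPart_highPart (hA : IsSetPartition n A) (hk : IsBreak k A) :
    concatP k (lowPart k A) (highPart k A) = A := by
  have hshift : shiftP k (highPart k A) = A.filter (¬ · ⊆ ground k) := by
    rw [shiftP, highPart, image_image]
    refine (image_congr fun D hD => ?_).trans image_id
    rw [mem_coe, mem_filter] at hD
    rw [Function.comp_apply, image_image, id]
    refine (image_congr fun x hx => ?_).trans image_id
    have := lt_of_mem_of_not_subset_ground hA hk hD.1 hD.2 hx
    simp only [Function.comp_apply, id]
    omega
  rw [concatP, hshift, lowPart, filter_union_filter_not_eq]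

lemma lowPart_concatP (hB : IsSetPartition k B) (hC : IsSetPartition m C) :
    lowPart k (concatP k B C) = B := by
  rw [lowPart, concatP, filter_union,
    filter_true_of_mem fun D hD => IsPartitionOf.subset_of_mem hB hD,
    filter_false_of_mem fun D hD => not_subset_ground_of_mem_shiftP hC hD, union_empty]

lemma highPart_concatP (hB : IsSetPartition k B) (hC : IsSetPartition m C) :
    highPart k (concatP k B C) = C := by
  rw [highPart, concatP, filter_union,
    filter_false_of_mem fun D hD h => h (IsPartitionOf.subset_of_mem hB hD),
    filter_true_of_mem fun D hD => not_subset_ground_of_mem_shiftP hC hD, empty_union,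
    shiftP, image_image]
  simp [Function.comp_def, image_image]

end Breaks

section FirstFactor

variable {n k k' m m' : ℕ} {A B B' C C' : Finset (Finset ℕ)}

lemma atomicP_iff :
    AtomicP n A ↔ IsSetPartition n A ∧ 0 < n ∧ ∀ j, 0 < j → j < n → ¬ IsBreak j A := by
  refine and_congr_right fun hA => and_congr_right fun _ => ?_
  constructor
  · rintro hA_atomic j hj hjn hbrk
    refine hA_atomic ⟨j, _, _, hj, hjn, hA.lowPart hjn.le hbrk, hA.highPart hjn.le hbrk, ?_⟩
    exact (concatP_lowPart_highPart hA hbrk).symm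
  · rintro h ⟨j, B, C, hj, hjn, hB, hC, rfl⟩
    exact h j hj hjn (isBreak_concatP hB hC)

/-- The first atomic factor ends at the least positive break. -/
theorem exists_atomicP_concatP (hA : IsSetPartition n A) (hn : 0 < n) :
    ∃ k B C, k ≤ n ∧ AtomicP k B ∧ IsSetPartition (n - k) C ∧ A = concatP k B C := by
  have hex : ∃ k, 0 < k ∧ IsBreak k A := ⟨n, hn, hA.isBreak⟩
  obtain ⟨hk, hbrk⟩ := Nat.find_spec hex
  have hkn : Nat.find hex ≤ n := Nat.find_min' hex ⟨hn, hA.isBreak⟩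
  refine ⟨Nat.find hex, _, _, hkn, ?_, hA.highPart hkn hbrk,
    (concatP_lowPart_highPart hA hbrk).symm⟩
  refine atomicP_iff.2 ⟨hA.lowPart hkn hbrk, hk, fun j hj hjk hj_brk => ?_⟩
  exact Nat.find_min hex hjk ⟨hj, hbrk.of_lowPart hjk.le hj_brk⟩

lemma le_of_concatP_eq (hB : AtomicP k B) (hB' : IsSetPartition k' B') (hk' : 0 < k')
    (hC' : IsSetPartition m' C') (h : concatP k B C = concatP k' B' C') : k ≤ k' := by
  by_contra! hlt
  have hbrk : IsBreak k' (concatP k B C) := h ▸ isBreak_concatP hB' hC'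
  exact (atomicP_iff.1 hB).2.2 k' hk' hlt (hbrk.subset Finset.subset_union_left)

theorem concatP_injective_of_atomicP (hB : AtomicP k B) (hB' : AtomicP k' B')
    (hC : IsSetPartition m C) (hC' : IsSetPartition m' C')
    (h : concatP k B C = concatP k' B' C') : k = k' ∧ B = B' ∧ C = C' := by
  obtain rfl : k = k' := le_antisymm (le_of_concatP_eq hB hB'.1 hB'.2.1 hC' h)
    (le_of_concatP_eq hB' hB.1 hB.2.1 hC h.symm)
  refine ⟨rfl, ?_, ?_⟩
  · rw [← lowPart_concatP hB.1 hC, h, lowPart_concatP hB'.1 hC']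
  · rw [← highPart_concatP hB.1 hC, h, highPart_concatP hB'.1 hC']

end FirstFactor

section Counting

open Finset

variable {n : ℕ} {P : Finset (Finset ℕ) → Prop} {A : Finset (Finset ℕ)}

lemma mem_SPs : A ∈ SPs n P ↔ IsSetPartition n A ∧ P A := by
  refine mem_filter.trans (and_iff_right_of_imp fun h => mem_powerset.2 fun B hB => ?_)
  exact mem_powerset.2 (IsPartitionOf.subset_of_mem h.1 hB)

lemma card_SPs (n : ℕ) (P : Finset (Finset ℕ) → Prop) :
    (SPs n P).card = Nat.card {A // IsSetPartition n A ∧ P A} :=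
  (Nat.card_eq_finsetCard _).symm.trans (Nat.card_congr (Equiv.subtypeEquivRight fun _ => mem_SPs))

lemma stirling2_eq_card (n r : ℕ) : stirling2 n r = (SPs n (·.card = r)).card :=
  (card_SPs n _).symm

lemma atomCount_eq_card (k i : ℕ) :
    atomCount k i = (SPs k fun B => AtomicP k B ∧ B.card = i).card := by
  rw [card_SPs, atomCount]
  exact Nat.card_congr (Equiv.subtypeEquivRight fun B =>
    ⟨fun h => ⟨h.1.1, h⟩, fun h => h.2⟩)

lemma isSetPartition_zero_iff : IsSetPartition 0 A ↔ A = ∅ := by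
  refine ⟨fun hA => eq_empty_of_forall_notMem fun B hB => ?_, fun h => ?_⟩
  · obtain ⟨x, hx⟩ := hA.1 B hB
    simpa [ground] using IsPartitionOf.subset_of_mem hA hB hx
  · subst h
    exact ⟨by simp, by simp, rfl⟩

lemma stirling2_zero (r : ℕ) : stirling2 0 r = if r = 0 then 1 else 0 := by
  have h : SPs 0 (·.card = r) = ({∅} : Finset (Finset (Finset ℕ))).filter (·.card = r) := by
    ext A
    simp [mem_SPs, isSetPartition_zero_iff]
  rw [stirling2_eq_card, h, filter_singleton]
  split_ifs <;> simp_all [eq_comm]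

lemma stirling2_eq_sum_of_pos (hn : 0 < n) (r : ℕ) :
    stirling2 n r = ∑ x ∈ antidiagonal n, ∑ y ∈ antidiagonal r,
      (if x.1 = 0 then 0 else atomCount x.1 y.1) * stirling2 x.2 y.2 := by
  simp_rw [← sum_product', ite_mul, zero_mul, sum_ite, sum_const_zero, zero_add]
  simp_rw [atomCount_eq_card, stirling2_eq_card, ← card_product]
  rw [← card_sigma]
  symm
  apply card_bij (fun x _ => concatP x.1.1.1 x.2.1 x.2.2)
  · rintro ⟨⟨⟨k, m⟩, ⟨i, j⟩⟩, B, C⟩ hx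
    simp only [mem_sigma, mem_filter, mem_product, HasAntidiagonal.mem_antidiagonal,
      mem_SPs] at hx
    obtain ⟨⟨⟨rfl, rfl⟩, -⟩, ⟨-, hB, rfl⟩, hC, rfl⟩ := hx
    exact mem_SPs.2 ⟨hB.1.concatP hC, card_concatP hB.1 hC⟩
  · rintro ⟨⟨⟨k, m⟩, ⟨i, j⟩⟩, B, C⟩ hx ⟨⟨⟨k', m'⟩, ⟨i', j'⟩⟩, B', C'⟩ hx' h
    simp only [mem_sigma, mem_filter, mem_product, HasAntidiagonal.mem_antidiagonal,
      mem_SPs] at hx hx'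
    obtain ⟨⟨⟨hkm, rfl⟩, -⟩, ⟨-, hB, rfl⟩, hC, rfl⟩ := hx
    obtain ⟨⟨⟨hkm', -⟩, -⟩, ⟨-, hB', rfl⟩, hC', rfl⟩ := hx'
    obtain ⟨rfl, rfl, rfl⟩ := concatP_injective_of_atomicP hB hB' hC hC' h
    obtain rfl : m = m' := by omega
    rfl
  · intro A hA
    rw [mem_SPs] at hA
    obtain ⟨k, B, C, hkn, hB, hC, rfl⟩ := exists_atomicP_concatP hA.1 hn
    refine ⟨⟨⟨⟨k, n - k⟩, ⟨B.card, C.card⟩⟩, B, C⟩, ?_, rfl⟩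
    simp only [mem_sigma, mem_filter, mem_product, HasAntidiagonal.mem_antidiagonal, mem_SPs]
    refine ⟨⟨⟨by omega, ?_⟩, hB.2.1.ne'⟩, ⟨hB.1, hB, trivial⟩, hC, trivial⟩
    rw [← hA.2, card_concatP hB.1 hC]

theorem stirling2_eq_sum (n r : ℕ) :
    stirling2 n r = (if n = 0 ∧ r = 0 then 1 else 0) +
      ∑ x ∈ antidiagonal n, ∑ y ∈ antidiagonal r,
        (if x.1 = 0 then 0 else atomCount x.1 y.1) * stirling2 x.2 y.2 := by
  rcases Nat.eq_zero_or_pos n with rfl | hn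
  · simp [stirling2_zero]
  · rw [if_neg (by omega), zero_add, stirling2_eq_sum_of_pos hn]

end Counting

open Finset in
lemma Finsupp.sum_antidiagonal_fin_two {M : Type*} [AddCommMonoid M] (d : Fin 2 →₀ ℕ)
    (f : ℕ × ℕ → ℕ × ℕ → M) :
    ∑ p ∈ antidiagonal d, f (p.1 0, p.2 0) (p.1 1, p.2 1) =
      ∑ x ∈ antidiagonal (d 0), ∑ y ∈ antidiagonal (d 1), f x y := by
  rw [← sum_product']
  refine sum_nbij' (fun p => ((p.1 0, p.2 0), (p.1 1, p.2 1)))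
    (fun q => (single 0 q.1.1 + single 1 q.2.1, single 0 q.1.2 + single 1 q.2.2)) ?_ ?_ ?_ ?_
    fun _ _ => rfl
  · intro p hp
    simp_all [← Finsupp.add_apply, HasAntidiagonal.mem_antidiagonal]
  · rintro ⟨⟨a, b⟩, ⟨c, e⟩⟩ hq
    simp only [mem_product, HasAntidiagonal.mem_antidiagonal] at hq ⊢
    ext i
    fin_cases i <;> simp [hq.1, hq.2]
  · intro p _
    ext i <;> fin_cases i <;> simp
  · intro q _
    simp

/-- with `t` the first variable and `q` the second,
`1/(1 - ∑_{k ≥ 1} ∑_i a_{k,i} t^i q^k) = ∑_{n,r} S_{n,r} t^r q^n`, i.e. the two series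
multiply to `1`. -/
theorem atomic_generating_function :
    (1 - (show MvPowerSeries (Fin 2) ℚ from
        fun d => if d 1 = 0 then (0 : ℚ) else (atomCount (d 1) (d 0) : ℚ))) *
      (show MvPowerSeries (Fin 2) ℚ from fun d => (stirling2 (d 1) (d 0) : ℚ)) = 1 := by
  ext d
  rw [sub_mul, one_mul, map_sub, MvPowerSeries.coeff_mul, MvPowerSeries.coeff_one,
    sub_eq_iff_eq_add]
  have hsum := Finsupp.sum_antidiagonal_fin_two d fun x y =>
    (if y.1 = 0 then (0 : ℚ) else (atomCount y.1 x.1 : ℚ)) * (stirling2 y.2 x.2 : ℚ)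
  have hd : d = 0 ↔ d 1 = 0 ∧ d 0 = 0 := by
    simp [Finsupp.ext_iff, Fin.forall_fin_two, and_comm]
  refine (congrArg (Nat.cast (R := ℚ)) (stirling2_eq_sum (d 1) (d 0))).trans ?_
  push_cast
  rw [Finset.sum_comm, ← hsum]
  -- the two sums agree once `MvPowerSeries.coeff` is unfolded
  congr 1
  exact if_congr hd.symm rfl rfl

end
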